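/- Minimizing (ρ/2)‖L - Y‖_F² + f(σ(L)) over matrices L, where f is a function of the vector of singular values only and ρ > 0, is achieved by a matrix of the form L = U·diag(s)·Vᵀ where Y = U·diag(σ(Y))·Vᵀ is an SVD of Y and s minimizes (ρ/2)‖s - σ(Y)‖² + f(s) over nonincreasing nonnegative vectors. -/

import Mathlib

open Matrix

/-- Rectangular diagonal matrix built from a sequence of singular values. -/
def svDiag (m n : ℕ) (σ : ℕ → ℝ) : Matrix (Fin m) (Fin n) ℝ :=
  fun i j => if (i : ℕ) = (j : ℕ) then σ (i : ℕ) else 0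

/-- Squared Frobenius norm of a real matrix. -/
def frobSq {m n : ℕ} (M : Matrix (Fin m) (Fin n) ℝ) : ℝ :=
  ∑ i, ∑ j, (M i j) ^ 2

/-- An admissible singular-value vector: nonincreasing, nonnegative, supported on
the first `min m n` entries. -/
def Admissible (m n : ℕ) (s : ℕ → ℝ) : Prop :=
  Antitone s ∧ (∀ j, 0 ≤ s j) ∧ ∀ j, min m n ≤ j → s j = 0

section Aux
open Finset

noncomputable def matExt {m n : ℕ} (M : Matrix (Fin m) (Fin n) ℝ) (i j : ℕ) : ℝ :=
  ∑ a : Fin m, ∑ b : Fin n, if (a : ℕ) = i ∧ (b : ℕ) = j then M a b else 0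

lemma matExt_apply {m n : ℕ} (M : Matrix (Fin m) (Fin n) ℝ) (a : Fin m) (b : Fin n) :
    matExt M (a : ℕ) (b : ℕ) = M a b := by
  unfold matExt
  rw [Finset.sum_eq_single a, Finset.sum_eq_single b]
  · simp
  · intro b' _ hb'; simp [Fin.val_eq_val, hb']
  · simp
  · intro a' _ ha'; simp [Fin.val_eq_val, ha']
  · simp

lemma matExt_zero {m n : ℕ} (M : Matrix (Fin m) (Fin n) ℝ) (i j : ℕ)
    (h : m ≤ i ∨ n ≤ j) : matExt M i j = 0 := by
  unfold matExt
  refine Finset.sum_eq_zero fun a _ => Finset.sum_eq_zero fun b _ => ?_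
  rcases h with h | h
  · have : (a : ℕ) ≠ i := by omega
    simp [this]
  · have : (b : ℕ) ≠ j := by omega
    simp [this]

-- frobSq via trace
lemma frobSq_eq_trace {m n : ℕ} (M : Matrix (Fin m) (Fin n) ℝ) :
    frobSq M = Matrix.trace (Mᵀ * M) := by
  unfold frobSq
  simp [Matrix.trace, Matrix.mul_apply, Matrix.diag, sq]
  exact Finset.sum_comm

lemma frobSq_conj {m n : ℕ} (U : Matrix (Fin m) (Fin m) ℝ) (V : Matrix (Fin n) (Fin n) ℝ)
    (A : Matrix (Fin m) (Fin n) ℝ) (hU' : Uᵀ * U = 1) (hV' : Vᵀ * V = 1) :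
    frobSq (U * A * Vᵀ) = frobSq A := by
  rw [frobSq_eq_trace, frobSq_eq_trace]
  have : (U * A * Vᵀ)ᵀ * (U * A * Vᵀ) = V * (Aᵀ * A) * Vᵀ := by
    simp [Matrix.transpose_mul, Matrix.mul_assoc]
    rw [← Matrix.mul_assoc Uᵀ U, hU', Matrix.one_mul]
  rw [this, Matrix.trace_mul_comm (V * (Aᵀ * A)) Vᵀ, ← Matrix.mul_assoc, hV', Matrix.one_mul]

lemma frobSq_svDiag {m n : ℕ} (u : ℕ → ℝ) :
    frobSq (svDiag m n u) = ∑ j ∈ Finset.range (min m n), u j ^ 2 := by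
  unfold frobSq svDiag
  have h1 : ∀ i : Fin m, (∑ j : Fin n, (if (i:ℕ) = (j:ℕ) then u i else 0)^2)
      = if (i:ℕ) < n then u i ^ 2 else 0 := by
    intro i
    rw [Fin.sum_univ_eq_sum_range (fun j => (if (i:ℕ) = j then u i else 0)^2) n]
    simp only [ite_pow, zero_pow, two_ne_zero, ne_eq, not_false_iff]
    rw [Finset.sum_ite_eq (Finset.range n) (i:ℕ) (fun _ => u i ^ 2)]
    simp
  simp only [h1]
  rw [Fin.sum_univ_eq_sum_range (fun i => if i < n then u i ^ 2 else 0) m]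
  rw [Finset.sum_ite, Finset.sum_const_zero, add_zero]
  apply Finset.sum_congr
  · ext k; simp only [Finset.mem_filter, Finset.mem_range]; omega
  · intros; rfl

lemma matExt_row {m n : ℕ} (M : Matrix (Fin m) (Fin n) ℝ) (i : Fin m) (k : ℕ) :
    matExt M (i:ℕ) k = ∑ b : Fin n, if (b:ℕ) = k then M i b else 0 := by
  unfold matExt
  rw [Finset.sum_eq_single i]
  · apply Finset.sum_congr rfl; intro b _; simp
  · intro a _ ha
    refine Finset.sum_eq_zero fun b _ => ?_
    have : (a:ℕ) ≠ (i:ℕ) := by simp [Fin.val_eq_val, ha]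
    simp [this]
  · simp

lemma svDiag_entry {m n : ℕ} (t : ℕ → ℝ) (a : Fin m) (b : Fin n) :
    svDiag m n t a b
      = ∑ k ∈ Finset.range (min m n),
          (if (a:ℕ) = k then 1 else 0) * (if (b:ℕ) = k then 1 else 0) * t k := by
  unfold svDiag
  by_cases h : (a:ℕ) = (b:ℕ)
  · rw [Finset.sum_eq_single (a:ℕ)]
    · simp [h]
    · intro k _ hk; simp [hk, Ne.symm hk]
    · intro hmem
      exfalso; apply hmem
      rw [Finset.mem_range]
      have := a.isLt; have := b.isLt; omega
  · rw [if_neg h]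
    refine (Finset.sum_eq_zero fun k _ => ?_).symm
    by_cases h1 : (a:ℕ) = k
    · have : (b:ℕ) ≠ k := fun hb => h (h1.trans hb.symm)
      simp [this]
    · simp [h1]

lemma entry_formula {m n : ℕ} (U' : Matrix (Fin m) (Fin m) ℝ) (V' : Matrix (Fin n) (Fin n) ℝ)
    (t : ℕ → ℝ) (i : Fin m) (j : Fin n) :
    (U' * svDiag m n t * V'ᵀ) i j
      = ∑ k ∈ Finset.range (min m n), t k * matExt U' (i:ℕ) k * matExt V' (j:ℕ) k := by
  simp only [Matrix.mul_apply, Matrix.transpose_apply, svDiag_entry, Finset.mul_sum,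
    Finset.sum_mul]
  conv_lhs => enter [2]; ext x; rw [Finset.sum_comm]
  rw [Finset.sum_comm]
  refine Finset.sum_congr rfl fun k _ => ?_
  rw [matExt_row, matExt_row, Finset.mul_sum]
  refine Finset.sum_congr rfl fun b _ => ?_
  rw [Finset.mul_sum, Finset.sum_mul]
  refine Finset.sum_congr rfl fun a _ => ?_
  split_ifs <;> ring

lemma sum3 {α β γ : Type*} (s₁ : Finset α) (s₂ : Finset β) (s₃ : Finset γ)
    (f : α → β → γ → ℝ) :
    ∑ a ∈ s₁, ∑ b ∈ s₂, ∑ c ∈ s₃, f a b c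
      = ∑ b ∈ s₂, ∑ c ∈ s₃, ∑ a ∈ s₁, f a b c :=
  calc ∑ a ∈ s₁, ∑ b ∈ s₂, ∑ c ∈ s₃, f a b c
      = ∑ b ∈ s₂, ∑ a ∈ s₁, ∑ c ∈ s₃, f a b c := Finset.sum_comm
    _ = ∑ b ∈ s₂, ∑ c ∈ s₃, ∑ a ∈ s₁, f a b c :=
        Finset.sum_congr rfl fun b _ => Finset.sum_comm

lemma sum_matExt_mul {m : ℕ} (P Q : Matrix (Fin m) (Fin m) ℝ) (k l : ℕ) :
    ∑ i : Fin m, matExt P (i:ℕ) k * matExt Q (i:ℕ) l = matExt (Pᵀ * Q) k l := by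
  simp only [matExt_row]
  unfold matExt
  simp only [Matrix.mul_apply, Matrix.transpose_apply, Finset.sum_mul_sum]
  rw [sum3]
  refine Finset.sum_congr rfl fun a _ => Finset.sum_congr rfl fun b _ => ?_
  by_cases h1 : (a:ℕ) = k <;> by_cases h2 : (b:ℕ) = l <;> simp [h1, h2]

lemma sum4 {α β γ δ : Type*} (s₁ : Finset α) (s₂ : Finset β) (s₃ : Finset γ) (s₄ : Finset δ)
    (f : α → β → γ → δ → ℝ) :
    ∑ a ∈ s₁, ∑ b ∈ s₂, ∑ c ∈ s₃, ∑ d ∈ s₄, f a b c d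
      = ∑ c ∈ s₃, ∑ d ∈ s₄, ∑ a ∈ s₁, ∑ b ∈ s₂, f a b c d :=
  calc ∑ a ∈ s₁, ∑ b ∈ s₂, ∑ c ∈ s₃, ∑ d ∈ s₄, f a b c d
      = ∑ a ∈ s₁, ∑ c ∈ s₃, ∑ b ∈ s₂, ∑ d ∈ s₄, f a b c d :=
        Finset.sum_congr rfl fun a _ => Finset.sum_comm
    _ = ∑ c ∈ s₃, ∑ a ∈ s₁, ∑ b ∈ s₂, ∑ d ∈ s₄, f a b c d := Finset.sum_comm
    _ = ∑ c ∈ s₃, ∑ a ∈ s₁, ∑ d ∈ s₄, ∑ b ∈ s₂, f a b c d :=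
        Finset.sum_congr rfl fun c _ => Finset.sum_congr rfl fun a _ => Finset.sum_comm
    _ = ∑ c ∈ s₃, ∑ d ∈ s₄, ∑ a ∈ s₁, ∑ b ∈ s₂, f a b c d :=
        Finset.sum_congr rfl fun c _ => Finset.sum_comm

lemma cross_formula {m n : ℕ} (U U' : Matrix (Fin m) (Fin m) ℝ)
    (V V' : Matrix (Fin n) (Fin n) ℝ) (t σ' : ℕ → ℝ) :
    ∑ i : Fin m, ∑ j : Fin n,
        (U' * svDiag m n t * V'ᵀ) i j * (U * svDiag m n σ' * Vᵀ) i j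
      = ∑ k ∈ Finset.range (min m n), ∑ l ∈ Finset.range (min m n),
          t k * σ' l * (matExt (U'ᵀ * U) k l * matExt (V'ᵀ * V) k l) := by
  simp only [entry_formula, Finset.sum_mul_sum]
  rw [sum4]
  refine Finset.sum_congr rfl fun k _ => Finset.sum_congr rfl fun l _ => ?_
  rw [← sum_matExt_mul, ← sum_matExt_mul, Finset.sum_mul_sum, Finset.mul_sum]
  refine Finset.sum_congr rfl fun i _ => ?_
  rw [Finset.mul_sum]
  refine Finset.sum_congr rfl fun j _ => ?_
  ring

lemma telescope (t : ℕ → ℝ) (k r : ℕ) (hk : k < r) (htr : t r = 0) :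
    t k = ∑ p ∈ Finset.range r, (if k ≤ p then t p - t (p+1) else 0) := by
  have h2 : ∀ N : ℕ, ∑ p ∈ Finset.range N, (t p - t (p+1)) = t 0 - t N := by
    intro N; induction N with
    | zero => simp
    | succ N ih => rw [Finset.sum_range_succ, ih]; ring
  rw [Finset.sum_ite, Finset.sum_const_zero, add_zero]
  have hf : Finset.filter (fun p => k ≤ p) (Finset.range r) = Finset.Ico k r := by
    ext p; simp [Finset.mem_Ico]; omega
  rw [hf, Finset.sum_Ico_eq_sub _ hk.le, h2, h2, htr]; ring

lemma count_le (p q r : ℕ) (hp : p < r) (hq : q < r) :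
    ∑ k ∈ Finset.range r, (if k ≤ p ∧ k ≤ q then (1:ℝ) else 0) = min p q + 1 := by
  rw [Finset.sum_ite, Finset.sum_const_zero, add_zero, Finset.sum_const]
  have hf : Finset.filter (fun k => k ≤ p ∧ k ≤ q) (Finset.range r)
      = Finset.range (min p q + 1) := by
    ext k; simp; omega
  rw [hf]; simp

lemma vn_core (r : ℕ) (t σ' : ℕ → ℝ)
    (ht : Antitone t) (htr : t r = 0)
    (hσ : Antitone σ') (hσr : σ' r = 0)
    (W : ℕ → ℕ → ℝ)
    (hrow : ∀ k, ∑ l ∈ Finset.range r, |W k l| ≤ 1)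
    (hcol : ∀ l, ∑ k ∈ Finset.range r, |W k l| ≤ 1) :
    ∑ k ∈ Finset.range r, ∑ l ∈ Finset.range r, t k * σ' l * W k l
      ≤ ∑ k ∈ Finset.range r, t k * σ' k := by
  set D : ℕ → ℝ := fun p => t p - t (p+1) with hD
  set E : ℕ → ℝ := fun q => σ' q - σ' (q+1) with hE
  have hD0 : ∀ p, 0 ≤ D p := fun p => by
    have := ht (Nat.le_succ p); simp [hD]; linarith
  have hE0 : ∀ q, 0 ≤ E q := fun q => by
    have := hσ (Nat.le_succ q); simp [hE]; linarith
  -- rewrite LHS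
  have hL : ∑ k ∈ Finset.range r, ∑ l ∈ Finset.range r, t k * σ' l * W k l
      = ∑ p ∈ Finset.range r, ∑ q ∈ Finset.range r, (D p * E q *
          ∑ k ∈ Finset.range r, ∑ l ∈ Finset.range r,
            (if k ≤ p ∧ l ≤ q then W k l else 0)) := by
    calc ∑ k ∈ Finset.range r, ∑ l ∈ Finset.range r, t k * σ' l * W k l
        = ∑ k ∈ Finset.range r, ∑ l ∈ Finset.range r, ∑ p ∈ Finset.range r,
            ∑ q ∈ Finset.range r,
            ((if k ≤ p then D p else 0) * (if l ≤ q then E q else 0) * W k l) := by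
          refine Finset.sum_congr rfl fun k hk => Finset.sum_congr rfl fun l hl => ?_
          rw [Finset.mem_range] at hk hl
          rw [telescope t k r hk htr, telescope σ' l r hl hσr, Finset.sum_mul_sum,
            Finset.sum_mul]
          refine Finset.sum_congr rfl fun p _ => ?_
          rw [Finset.sum_mul]
      _ = ∑ p ∈ Finset.range r, ∑ q ∈ Finset.range r, ∑ k ∈ Finset.range r,
            ∑ l ∈ Finset.range r,
            ((if k ≤ p then D p else 0) * (if l ≤ q then E q else 0) * W k l) :=
          sum4 _ _ _ _ _
      _ = _ := by
          refine Finset.sum_congr rfl fun p _ => Finset.sum_congr rfl fun q _ => ?_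
          rw [Finset.mul_sum]
          refine Finset.sum_congr rfl fun k _ => ?_
          rw [Finset.mul_sum]
          refine Finset.sum_congr rfl fun l _ => ?_
          by_cases h1 : k ≤ p <;> by_cases h2 : l ≤ q <;> simp [h1, h2] <;> ring
  -- rewrite RHS
  have hR : ∑ k ∈ Finset.range r, t k * σ' k
      = ∑ p ∈ Finset.range r, ∑ q ∈ Finset.range r, (D p * E q *
          ∑ k ∈ Finset.range r, (if k ≤ p ∧ k ≤ q then (1:ℝ) else 0)) := by
    calc ∑ k ∈ Finset.range r, t k * σ' k
        = ∑ k ∈ Finset.range r, ∑ p ∈ Finset.range r, ∑ q ∈ Finset.range r,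
            ((if k ≤ p then D p else 0) * (if k ≤ q then E q else 0)) := by
          refine Finset.sum_congr rfl fun k hk => ?_
          rw [Finset.mem_range] at hk
          rw [telescope t k r hk htr, telescope σ' k r hk hσr, Finset.sum_mul_sum]
      _ = ∑ p ∈ Finset.range r, ∑ q ∈ Finset.range r, ∑ k ∈ Finset.range r,
            ((if k ≤ p then D p else 0) * (if k ≤ q then E q else 0)) :=
          sum3 _ _ _ _
      _ = _ := by
          refine Finset.sum_congr rfl fun p _ => Finset.sum_congr rfl fun q _ => ?_
          rw [Finset.mul_sum]
          refine Finset.sum_congr rfl fun k _ => ?_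
          by_cases h1 : k ≤ p <;> by_cases h2 : k ≤ q <;> simp [h1, h2] <;> ring
  rw [hL, hR]
  refine Finset.sum_le_sum fun p hp => Finset.sum_le_sum fun q hq => ?_
  rw [Finset.mem_range] at hp hq
  have hS : (∑ k ∈ Finset.range r, ∑ l ∈ Finset.range r,
      (if k ≤ p ∧ l ≤ q then W k l else 0)) ≤ min p q + 1 := by
    have b1 : (∑ k ∈ Finset.range r, ∑ l ∈ Finset.range r,
        (if k ≤ p ∧ l ≤ q then W k l else 0)) ≤ p + 1 := by
      have step : ∀ k ∈ Finset.range r,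
          (∑ l ∈ Finset.range r, (if k ≤ p ∧ l ≤ q then W k l else 0))
            ≤ (if k ≤ p then (1:ℝ) else 0) := by
        intro k _
        by_cases h1 : k ≤ p
        · simp only [h1, true_and, if_true]
          calc ∑ l ∈ Finset.range r, (if l ≤ q then W k l else 0)
              ≤ ∑ l ∈ Finset.range r, |W k l| := by
                refine Finset.sum_le_sum fun l _ => ?_
                by_cases h2 : l ≤ q <;> simp [h2, le_abs_self, abs_nonneg]
            _ ≤ 1 := hrow k
        · simp [h1]
      calc _ ≤ ∑ k ∈ Finset.range r, (if k ≤ p then (1:ℝ) else 0) :=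
            Finset.sum_le_sum step
        _ ≤ p + 1 := by
            rw [Finset.sum_ite, Finset.sum_const_zero, add_zero, Finset.sum_const]
            have : (Finset.filter (fun k => k ≤ p) (Finset.range r)).card ≤ p + 1 := by
              have : Finset.filter (fun k => k ≤ p) (Finset.range r) ⊆
                  Finset.range (p+1) := by intro x; simp
              calc _ ≤ (Finset.range (p+1)).card := Finset.card_le_card this
                _ = p + 1 := Finset.card_range _
            rw [nsmul_eq_mul, mul_one]
            exact_mod_cast this
    have b2 : (∑ k ∈ Finset.range r, ∑ l ∈ Finset.range r,
        (if k ≤ p ∧ l ≤ q then W k l else 0)) ≤ q + 1 := by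
      rw [Finset.sum_comm]
      have step : ∀ l ∈ Finset.range r,
          (∑ k ∈ Finset.range r, (if k ≤ p ∧ l ≤ q then W k l else 0))
            ≤ (if l ≤ q then (1:ℝ) else 0) := by
        intro l _
        by_cases h2 : l ≤ q
        · simp only [h2, and_true, if_true]
          calc ∑ k ∈ Finset.range r, (if k ≤ p then W k l else 0)
              ≤ ∑ k ∈ Finset.range r, |W k l| := by
                refine Finset.sum_le_sum fun k _ => ?_
                by_cases h1 : k ≤ p <;> simp [h1, le_abs_self, abs_nonneg]
            _ ≤ 1 := hcol l
        · simp [h2]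
      calc _ ≤ ∑ l ∈ Finset.range r, (if l ≤ q then (1:ℝ) else 0) :=
            Finset.sum_le_sum step
        _ ≤ q + 1 := by
            rw [Finset.sum_ite, Finset.sum_const_zero, add_zero, Finset.sum_const]
            have : (Finset.filter (fun l => l ≤ q) (Finset.range r)).card ≤ q + 1 := by
              have : Finset.filter (fun l => l ≤ q) (Finset.range r) ⊆
                  Finset.range (q+1) := by intro x; simp
              calc _ ≤ (Finset.range (q+1)).card := Finset.card_le_card this
                _ = q + 1 := Finset.card_range _
            rw [nsmul_eq_mul, mul_one]
            exact_mod_cast this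
    rcases le_total p q with h | h
    · simpa [min_eq_left h] using b1
    · simpa [min_eq_right h] using b2
  rw [count_le p q r hp hq]
  have := mul_nonneg (hD0 p) (hE0 q)
  calc D p * E q * _ ≤ D p * E q * ((min p q : ℕ) + 1) := by
        apply mul_le_mul_of_nonneg_left _ this
        exact_mod_cast hS
    _ = D p * E q * ((min p q : ℕ) + 1) := rfl

lemma matExt_sq_row {m n : ℕ} (M : Matrix (Fin m) (Fin n) ℝ) (hM : M * Mᵀ = 1) (i : ℕ) :
    ∑ j ∈ Finset.range n, (matExt M i j)^2 ≤ 1 := by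
  by_cases h : i < m
  · have he : ∑ j ∈ Finset.range n, (matExt M i j)^2 = ∑ j : Fin n, (M ⟨i,h⟩ j)^2 := by
      rw [← Fin.sum_univ_eq_sum_range (fun j => (matExt M i j)^2) n]
      refine Finset.sum_congr rfl fun j _ => ?_
      exact congrArg (· ^ 2) (matExt_apply M ⟨i,h⟩ j)
    rw [he]
    have h2 : ∑ j : Fin n, (M ⟨i,h⟩ j)^2 = (M * Mᵀ) ⟨i,h⟩ ⟨i,h⟩ := by
      simp [Matrix.mul_apply, sq]
    rw [h2, hM, Matrix.one_apply_eq]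
  · have hz : ∑ j ∈ Finset.range n, (matExt M i j)^2 = 0 :=
      Finset.sum_eq_zero fun j _ => by
        rw [matExt_zero M i j (Or.inl (le_of_not_gt h))]; norm_num
    rw [hz]; norm_num

lemma matExt_sq_col {m n : ℕ} (M : Matrix (Fin m) (Fin n) ℝ) (hM : Mᵀ * M = 1) (j : ℕ) :
    ∑ i ∈ Finset.range m, (matExt M i j)^2 ≤ 1 := by
  by_cases h : j < n
  · have he : ∑ i ∈ Finset.range m, (matExt M i j)^2 = ∑ i : Fin m, (M i ⟨j,h⟩)^2 := by
      rw [← Fin.sum_univ_eq_sum_range (fun i => (matExt M i j)^2) m]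
      refine Finset.sum_congr rfl fun i _ => ?_
      exact congrArg (· ^ 2) (matExt_apply M i ⟨j,h⟩)
    rw [he]
    have h2 : ∑ i : Fin m, (M i ⟨j,h⟩)^2 = (Mᵀ * M) ⟨j,h⟩ ⟨j,h⟩ := by
      simp [Matrix.mul_apply, sq]
    rw [h2, hM, Matrix.one_apply_eq]
  · have hz : ∑ i ∈ Finset.range m, (matExt M i j)^2 = 0 :=
      Finset.sum_eq_zero fun i _ => by
        rw [matExt_zero M i j (Or.inr (le_of_not_gt h))]; norm_num
    rw [hz]; norm_num

/-- Cauchy–Schwarz step: products of two "sub-unit-norm" families have abs sum ≤ 1. -/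
lemma abs_prod_sum_le {r : ℕ} (a b : ℕ → ℝ)
    (ha : ∑ l ∈ Finset.range r, (a l)^2 ≤ 1) (hb : ∑ l ∈ Finset.range r, (b l)^2 ≤ 1) :
    ∑ l ∈ Finset.range r, |a l * b l| ≤ 1 := by
  have cs := Finset.sum_mul_sq_le_sq_mul_sq (Finset.range r)
    (fun l => |a l|) (fun l => |b l|)
  simp only [sq_abs] at cs
  have h1 : (∑ l ∈ Finset.range r, |a l| * |b l|)^2 ≤ 1 := by
    calc (∑ l ∈ Finset.range r, |a l| * |b l|)^2
        ≤ (∑ l ∈ Finset.range r, (a l)^2) * ∑ l ∈ Finset.range r, (b l)^2 := cs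
      _ ≤ 1 := by
          have ha0 : 0 ≤ ∑ l ∈ Finset.range r, (a l)^2 :=
            Finset.sum_nonneg fun l _ => sq_nonneg _
          have hb0 : 0 ≤ ∑ l ∈ Finset.range r, (b l)^2 :=
            Finset.sum_nonneg fun l _ => sq_nonneg _
          nlinarith
  have h0 : 0 ≤ ∑ l ∈ Finset.range r, |a l| * |b l| :=
    Finset.sum_nonneg fun l _ => mul_nonneg (abs_nonneg _) (abs_nonneg _)
  calc ∑ l ∈ Finset.range r, |a l * b l|
      = ∑ l ∈ Finset.range r, |a l| * |b l| :=
        Finset.sum_congr rfl fun l _ => abs_mul _ _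
    _ ≤ 1 := by nlinarith

lemma sq_sum_subset {r n : ℕ} (hr : r ≤ n) (a : ℕ → ℝ) :
    ∑ l ∈ Finset.range r, (a l)^2 ≤ ∑ l ∈ Finset.range n, (a l)^2 :=
  Finset.sum_le_sum_of_subset_of_nonneg (Finset.range_subset_range.mpr hr)
    (fun l _ _ => sq_nonneg _)

lemma sub_sq_expand {r : ℕ} (u v : ℕ → ℝ) :
    ∑ j ∈ Finset.range r, (u j - v j)^2
      = ∑ j ∈ Finset.range r, (u j)^2 + ∑ j ∈ Finset.range r, (v j)^2
          - 2 * ∑ j ∈ Finset.range r, u j * v j := by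
  rw [Finset.mul_sum, ← Finset.sum_add_distrib, ← Finset.sum_sub_distrib]
  exact Finset.sum_congr rfl fun j _ => by ring

end Aux

/-- Minimizing `(ρ/2)‖L - Y‖_F² + f(σ(L))` over matrices `L`, where `f` depends only
on the singular values, is achieved by `L = U · diag s · Vᵀ` where `Y = U diag(σY) Vᵀ`
is an SVD of `Y` and `s` minimizes the corresponding vector problem
`(ρ/2)‖s - σY‖² + f s` over admissible (nonincreasing, nonnegative) vectors. -/
theorem stmt_15 {m n : ℕ} (ρ : ℝ) (hρ : 0 < ρ)
    (f : (ℕ → ℝ) → ℝ)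
    (Y : Matrix (Fin m) (Fin n) ℝ)
    (U : Matrix (Fin m) (Fin m) ℝ) (V : Matrix (Fin n) (Fin n) ℝ) (σY : ℕ → ℝ)
    (hU : U * Uᵀ = 1) (hU' : Uᵀ * U = 1) (hV : V * Vᵀ = 1) (hV' : Vᵀ * V = 1)
    (hσY : Admissible m n σY)
    (hY : Y = U * svDiag m n σY * Vᵀ)
    (s : ℕ → ℝ) (hs : Admissible m n s)
    (hmin : ∀ t : ℕ → ℝ, Admissible m n t →
      ρ / 2 * (∑ j ∈ Finset.range (min m n), (s j - σY j) ^ 2) + f s ≤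
        ρ / 2 * (∑ j ∈ Finset.range (min m n), (t j - σY j) ^ 2) + f t) :
    ∀ (L : Matrix (Fin m) (Fin n) ℝ)
      (U' : Matrix (Fin m) (Fin m) ℝ) (V' : Matrix (Fin n) (Fin n) ℝ) (t : ℕ → ℝ),
      U' * U'ᵀ = 1 → U'ᵀ * U' = 1 → V' * V'ᵀ = 1 → V'ᵀ * V' = 1 →
      Admissible m n t → L = U' * svDiag m n t * V'ᵀ →
      ρ / 2 * frobSq (U * svDiag m n s * Vᵀ - Y) + f s ≤
        ρ / 2 * frobSq (L - Y) + f t := by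
  obtain ⟨hσA, hσ0, hσZ⟩ := hσY
  intro L U' V' t hU1 hU2 hV1 hV2 htAdm hL
  obtain ⟨htA, ht0, htZ⟩ := htAdm
  -- step 1 : the value at the candidate minimizer
  have hdiff : U * svDiag m n s * Vᵀ - Y = U * svDiag m n (fun j => s j - σY j) * Vᵀ := by
    rw [hY]
    have hsub : svDiag m n (fun j => s j - σY j) = svDiag m n s - svDiag m n σY := by
      ext i j
      simp only [svDiag, Matrix.sub_apply]
      split_ifs <;> simp
    rw [hsub, Matrix.mul_sub, Matrix.sub_mul]
  have h1 : frobSq (U * svDiag m n s * Vᵀ - Y)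
      = ∑ j ∈ Finset.range (min m n), (s j - σY j)^2 := by
    rw [hdiff, frobSq_conj U V _ hU' hV', frobSq_svDiag]
  -- orthogonality of the mixed products
  have hA : (U'ᵀ * U) * (U'ᵀ * U)ᵀ = 1 := by
    rw [Matrix.transpose_mul, Matrix.transpose_transpose, Matrix.mul_assoc,
      ← Matrix.mul_assoc U Uᵀ U', hU, Matrix.one_mul, hU2]
  have hA' : (U'ᵀ * U)ᵀ * (U'ᵀ * U) = 1 := by
    rw [Matrix.transpose_mul, Matrix.transpose_transpose, Matrix.mul_assoc,
      ← Matrix.mul_assoc U' U'ᵀ U, hU1, Matrix.one_mul, hU']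
  have hB : (V'ᵀ * V) * (V'ᵀ * V)ᵀ = 1 := by
    rw [Matrix.transpose_mul, Matrix.transpose_transpose, Matrix.mul_assoc,
      ← Matrix.mul_assoc V Vᵀ V', hV, Matrix.one_mul, hV2]
  have hB' : (V'ᵀ * V)ᵀ * (V'ᵀ * V) = 1 := by
    rw [Matrix.transpose_mul, Matrix.transpose_transpose, Matrix.mul_assoc,
      ← Matrix.mul_assoc V' V'ᵀ V, hV1, Matrix.one_mul, hV']
  -- von Neumann bound on the cross term
  have hcross : ∑ i : Fin m, ∑ j : Fin n, L i j * Y i j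
      ≤ ∑ k ∈ Finset.range (min m n), t k * σY k := by
    rw [hL, hY, cross_formula]
    refine vn_core (min m n) t σY htA (htZ _ le_rfl) hσA (hσZ _ le_rfl)
      (fun k l => matExt (U'ᵀ * U) k l * matExt (V'ᵀ * V) k l) ?_ ?_
    · intro k
      refine abs_prod_sum_le _ _ ?_ ?_
      · exact le_trans (sq_sum_subset (min_le_left m n) _) (matExt_sq_row _ hA k)
      · exact le_trans (sq_sum_subset (min_le_right m n) _) (matExt_sq_row _ hB k)
    · intro l
      refine abs_prod_sum_le _ _ ?_ ?_
      · exact le_trans (sq_sum_subset (min_le_left m n) _) (matExt_sq_col _ hA' l)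
      · exact le_trans (sq_sum_subset (min_le_right m n) _) (matExt_sq_col _ hB' l)
  -- expansion of the Frobenius norm
  have h2 : frobSq (L - Y) = frobSq L + frobSq Y
      - 2 * ∑ i : Fin m, ∑ j : Fin n, L i j * Y i j := by
    unfold frobSq
    simp only [Matrix.sub_apply]
    rw [Finset.mul_sum, ← Finset.sum_add_distrib, ← Finset.sum_sub_distrib]
    refine Finset.sum_congr rfl fun i _ => ?_
    rw [Finset.mul_sum, ← Finset.sum_add_distrib, ← Finset.sum_sub_distrib]
    exact Finset.sum_congr rfl fun j _ => by ring
  have hfL : frobSq L = ∑ k ∈ Finset.range (min m n), (t k)^2 := by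
    rw [hL, frobSq_conj _ _ _ hU2 hV2, frobSq_svDiag]
  have hfY : frobSq Y = ∑ k ∈ Finset.range (min m n), (σY k)^2 := by
    rw [hY, frobSq_conj _ _ _ hU' hV', frobSq_svDiag]
  have h4 : ∑ j ∈ Finset.range (min m n), (t j - σY j)^2 ≤ frobSq (L - Y) := by
    rw [h2, hfL, hfY, sub_sq_expand]
    linarith [hcross]
  calc ρ/2 * frobSq (U * svDiag m n s * Vᵀ - Y) + f s
      = ρ/2 * (∑ j ∈ Finset.range (min m n), (s j - σY j)^2) + f s := by rw [h1]
    _ ≤ ρ/2 * (∑ j ∈ Finset.range (min m n), (t j - σY j)^2) + f t :=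
        hmin t ⟨htA, ht0, htZ⟩
    _ ≤ ρ/2 * frobSq (L - Y) + f t := by
        have hργ : (0:ℝ) ≤ ρ/2 := by linarith
        have := mul_le_mul_of_nonneg_left h4 hργ
        linarith
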